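/- arXiv:2502.17773 — 5 statements merged into one kernel-verified Lean document; each statement's English description precedes it below -/
import Mathlib

section
/- Fix α, δ ∈ (0,1) and r ∈ (0,1/2], and assume μ(t) ∈ [r, 1−r] for every t ∈ Ψ. Then there exist κ₀ = κ₀(α,δ,r) ∈ ℕ and c = c(α,δ,r) > 0, depending only on α, δ, r, such that for every integer κ ≥ κ₀: P^{⊗κ}({z ∈ Z^κ : q_{1−α}(z) ≤ c/κ}) ≥ 1 − δ. -/
open MeasureTheory
open scoped ENNReal

universe u v

/-- χ²-discrepancy between Bernoulli means: `(a - b)² / (b (1 - b))`, set to `∞`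
when `b ∈ {0, 1}`. -/
noncomputable def chiDiv (a b : ℝ) : ℝ≥0∞ :=
  if b = 0 ∨ b = 1 then ⊤ else ENNReal.ofReal ((a - b) ^ 2 / (b * (1 - b)))

/-- The `β`-quantile of the `[0,∞]`-valued function `g` under the measure `ν`. -/
noncomputable def quantileE {Ψ : Type u} [MeasurableSpace Ψ] (ν : Measure Ψ)
    (g : Ψ → ℝ≥0∞) (β : ℝ) : ℝ≥0∞ :=
  sInf {x : ℝ≥0∞ | ENNReal.ofReal β ≤ ν {t | g t ≤ x}}

/-!
Fix a question `t`. The `κ` summands `F (z i, t)` are i.i.d. with values in `[0, 1]`, so their sum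
has variance at most `κ / 4`, and Chebyshev bounds the probability that the empirical mean misses
`μ(t)` by `η = √(c r / 4κ)` or more by `1 / (c r)`. On the complementary event the empirical mean
lies in `[r/2, 1 - r/2]` (this needs `κ ≥ c / r`), where the denominator of `Δ_z(t)` is at least
`r / 4`, so `Δ_z(t) ≤ 4η² / r = c / κ`. With `c = 1 / (α δ r)`, Tonelli makes the expected
`Π`-mass of questions with `Δ_z(t) > c / κ` at most `α δ`, so by Markov it reaches `α` with
probability at most `δ`; otherwise the `(1 - α)`-quantile of `Δ_z` is at most `c / κ`.
-/

open ProbabilityTheory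

@[fun_prop]
lemma Measurable.chiDiv {X : Type*} [MeasurableSpace X] {f g : X → ℝ} (hf : Measurable f)
    (hg : Measurable g) : Measurable fun x => chiDiv (f x) (g x) := by
  refine Measurable.ite ?_ measurable_const (by fun_prop)
  exact (measurableSet_singleton 0).preimage hg |>.union <|
    (measurableSet_singleton 1).preimage hg

lemma chiDiv_le_of_abs_sub_lt {a b r η : ℝ} (ha : a ∈ Set.Icc r (1 - r)) (hη : η ≤ r / 2)
    (hab : |b - a| < η) : chiDiv a b ≤ ENNReal.ofReal (4 * η ^ 2 / r) := by
  obtain ⟨hb₁, hb₂⟩ := abs_lt.mp hab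
  have hr : 0 < r := by linarith [abs_nonneg (b - a)]
  have hden : r / 4 ≤ b * (1 - b) := by nlinarith [ha.1, ha.2]
  rw [chiDiv, if_neg (by rintro (rfl | rfl) <;> linarith [ha.1, ha.2])]
  refine ENNReal.ofReal_le_ofReal ?_
  have hnum : (a - b) ^ 2 ≤ η ^ 2 := by nlinarith
  calc (a - b) ^ 2 / (b * (1 - b)) ≤ η ^ 2 / (r / 4) :=
        div_le_div₀ (sq_nonneg η) hnum (by positivity) hden
    _ = 4 * η ^ 2 / r := by field_simp

lemma measure_le_abs_sum_sub_mul_integral_le {Z : Type*} [MeasurableSpace Z] (P : Measure Z)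
    [IsProbabilityMeasure P] {f : Z → ℝ} (hf : Measurable f) (hf01 : ∀ x, f x ∈ Set.Icc 0 1)
    (κ : ℕ) {ε : ℝ} (hε : 0 < ε) :
    (Measure.pi fun _ : Fin κ => P) {z | ε ≤ |∑ i, f (z i) - κ * ∫ x, f x ∂P|}
      ≤ ENNReal.ofReal (κ / (4 * ε ^ 2)) := by
  have hf2 : MemLp f 2 P := memLp_of_bounded (ae_of_all _ hf01) hf.aestronglyMeasurable 2
  have hfi (i : Fin κ) : MemLp (fun z : Fin κ → Z => f (z i)) 2 (Measure.pi fun _ => P) :=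
    hf2.comp_measurePreserving (measurePreserving_eval _ i)
  have hX (z : Fin κ → Z) : (∑ i, fun z : Fin κ → Z => f (z i)) z = ∑ i, f (z i) :=
    Finset.sum_apply _ _ _
  have hmean : ∫ z : Fin κ → Z, ∑ i, f (z i) ∂(Measure.pi fun _ => P) = κ * ∫ x, f x ∂P := by
    rw [integral_finsetSum _ fun i _ => (hfi i).integrable one_le_two]
    simp only [integral_comp_eval (μ := fun _ : Fin κ => P) hf.aestronglyMeasurable,
      Finset.sum_const, Finset.card_univ, Fintype.card_fin, nsmul_eq_mul]
  have hvar : variance (∑ i, fun z : Fin κ → Z => f (z i)) (Measure.pi fun _ => P) ≤ κ / 4 := by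
    rw [variance_sum_pi fun _ => hf2]
    calc ∑ _i : Fin κ, variance f P ≤ ∑ _i : Fin κ, ((1 - 0) / 2 : ℝ) ^ 2 :=
          Finset.sum_le_sum fun _ _ =>
            variance_le_sq_of_bounded (ae_of_all _ hf01) hf.aemeasurable
      _ = κ / 4 := by norm_num [div_eq_mul_inv]
  have hcheb := meas_ge_le_variance_div_sq (memLp_finsetSum' Finset.univ fun i _ => hfi i) hε
  simp only [hX, hmean] at hcheb
  refine hcheb.trans (ENNReal.ofReal_le_ofReal ?_)
  rw [← div_div]
  exact div_le_div_of_nonneg_right hvar (by positivity)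

lemma measure_lt_chiDiv_empiricalMean_le {Z : Type*} [MeasurableSpace Z] (P : Measure Z)
    [IsProbabilityMeasure P] {f : Z → ℝ} (hf : Measurable f) (hf01 : ∀ x, f x ∈ Set.Icc 0 1)
    {r : ℝ} (hμ : ∫ x, f x ∂P ∈ Set.Icc r (1 - r)) {κ : ℕ} {c : ℝ} (hc : 0 < c)
    (hκ : c ≤ κ * r) :
    (Measure.pi fun _ : Fin κ => P)
        {z | ENNReal.ofReal (c / κ) < chiDiv (∫ x, f x ∂P) ((∑ i, f (z i)) / κ)}
      ≤ ENNReal.ofReal (1 / (c * r)) := by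
  set μ := ∫ x, f x ∂P
  have hκr : 0 < κ * r := hc.trans_le hκ
  have hr : 0 < r := pos_of_mul_pos_right hκr κ.cast_nonneg
  have hκ0 : (0 : ℝ) < κ := pos_of_mul_pos_left hκr hr.le
  set η := √(c * r / (4 * κ))
  have hη2 : η ^ 2 = c * r / (4 * κ) := Real.sq_sqrt (by positivity)
  have hηr : η ≤ r / 2 := by
    refine Real.sqrt_le_iff.mpr ⟨by positivity, ?_⟩
    rw [div_le_iff₀ (by positivity)]
    nlinarith
  have hsub : {z : Fin κ → Z | ENNReal.ofReal (c / κ) < chiDiv μ ((∑ i, f (z i)) / κ)}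
      ⊆ {z | κ * η ≤ |∑ i, f (z i) - κ * μ|} := by
    intro z hz
    by_contra hle
    have hmean : |(∑ i, f (z i)) / κ - μ| < η := by
      rw [show (∑ i, f (z i)) / κ - μ = (∑ i, f (z i) - κ * μ) / κ by field_simp, abs_div,
        abs_of_pos hκ0, div_lt_iff₀' hκ0]
      exact not_le.mp hle
    refine (chiDiv_le_of_abs_sub_lt hμ hηr hmean).not_gt (hz.trans_le' (le_of_eq ?_))
    rw [hη2]
    field_simp
  calc _ ≤ _ := measure_mono hsub
    _ ≤ ENNReal.ofReal (κ / (4 * (κ * η) ^ 2)) :=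
        measure_le_abs_sum_sub_mul_integral_le P hf hf01 κ (by positivity)
    _ = ENNReal.ofReal (1 / (c * r)) := by
        rw [mul_pow, hη2]
        congr 1
        field_simp

lemma quantileE_le_of_measure_lt_le {Ψ : Type u} [MeasurableSpace Ψ] {ν : Measure Ψ}
    [IsProbabilityMeasure ν] {g : Ψ → ℝ≥0∞} (hg : Measurable g) {x : ℝ≥0∞} {α : ℝ}
    (hα : 0 ≤ α) (h : ν {t | x < g t} ≤ ENNReal.ofReal α) : quantileE ν g (1 - α) ≤ x := by
  refine sInf_le (show ENNReal.ofReal (1 - α) ≤ ν {t | g t ≤ x} from ?_)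
  have hcompl : {t | g t ≤ x} = {t | x < g t}ᶜ := by ext; simp
  rw [hcompl, prob_compl_eq_one_sub (measurableSet_lt measurable_const hg),
    ENNReal.ofReal_sub _ hα, ENNReal.ofReal_one]
  exact tsub_le_tsub_left h 1

lemma le_measure_quantileE_le {X : Type*} {Ψ : Type u} [MeasurableSpace X] [MeasurableSpace Ψ]
    (P : Measure X) [IsProbabilityMeasure P] (ν : Measure Ψ) [IsProbabilityMeasure ν]
    {g : X → Ψ → ℝ≥0∞} (hg : Measurable (Function.uncurry g)) {x : ℝ≥0∞} {α δ : ℝ}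
    (hα : 0 < α) (hδ : 0 ≤ δ) (h : ∀ t, P {z | x < g z t} ≤ ENNReal.ofReal (α * δ)) :
    ENNReal.ofReal (1 - δ) ≤ P {z | quantileE ν (g z) (1 - α) ≤ x} := by
  have hS : MeasurableSet {p : X × Ψ | x < Function.uncurry g p} :=
    measurableSet_lt measurable_const hg
  have hB : Measurable fun z => ν {t | x < g z t} := measurable_measure_prodMk_left hS
  have hmean : ∫⁻ z, ν {t | x < g z t} ∂P ≤ ENNReal.ofReal α * ENNReal.ofReal δ :=
    calc ∫⁻ z, ν {t | x < g z t} ∂P = P.prod ν {p | x < Function.uncurry g p} :=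
          (Measure.prod_apply hS).symm
      _ = ∫⁻ t, P {z | x < g z t} ∂ν := Measure.prod_apply_symm hS
      _ ≤ ∫⁻ _, ENNReal.ofReal (α * δ) ∂ν := lintegral_mono h
      _ = ENNReal.ofReal α * ENNReal.ofReal δ := by simp [ENNReal.ofReal_mul hα.le]
  have hmarkov : P {z | ENNReal.ofReal α ≤ ν {t | x < g z t}} ≤ ENNReal.ofReal δ :=
    (ENNReal.mul_le_mul_iff_right (by simp [hα]) ENNReal.ofReal_ne_top).mp
      ((mul_meas_ge_le_lintegral₀ hB.aemeasurable _).trans hmean)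
  calc ENNReal.ofReal (1 - δ) ≤ 1 - P {z | ENNReal.ofReal α ≤ ν {t | x < g z t}} := by
        rw [ENNReal.ofReal_sub _ hδ, ENNReal.ofReal_one]
        exact tsub_le_tsub_left hmarkov 1
    _ = P {z | ENNReal.ofReal α ≤ ν {t | x < g z t}}ᶜ :=
        (prob_compl_eq_one_sub (hB measurableSet_Ici)).symm
    _ ≤ P {z | quantileE ν (g z) (1 - α) ≤ x} := measure_mono fun z hz =>
        quantileE_le_of_measure_lt_le hg.of_uncurry_left hα.le
          (not_le.mp (Set.notMem_ofPred_iff.mp hz)).le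

/-- with probability at least `1 - δ` over `κ ≥ κ₀` i.i.d. hidden profiles,
the `(1-α)`-quantile (over questions) of the χ²-discrepancy between the true mean
`μ(t)` and the hidden-pool mean `μ̂_κ(z, t)` is at most `c/κ`, where `κ₀` and `c`
depend only on `α, δ, r`. -/
theorem stmt4 (α δ r : ℝ) (hα : α ∈ Set.Ioo (0 : ℝ) 1) (hδ : δ ∈ Set.Ioo (0 : ℝ) 1)
    (hr : r ∈ Set.Ioc (0 : ℝ) (1 / 2)) :
    ∃ (κ₀ : ℕ) (c : ℝ), 0 < c ∧
      ∀ (Ψ : Type u) (_ : MeasurableSpace Ψ) (Z : Type v) (_ : MeasurableSpace Z)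
        (Pq : Measure Ψ) (Pz : Measure Z),
        IsProbabilityMeasure Pq → IsProbabilityMeasure Pz →
      ∀ F : Z × Ψ → ℝ, Measurable F → (∀ zt, F zt ∈ Set.Icc (0 : ℝ) 1) →
        (∀ t : Ψ, (∫ zz, F (zz, t) ∂Pz) ∈ Set.Icc r (1 - r)) →
      ∀ κ : ℕ, κ₀ ≤ κ →
        ENNReal.ofReal (1 - δ) ≤
          (Measure.pi fun _ : Fin κ => Pz)
            {zv | quantileE Pq
                (fun t =>
                  chiDiv (∫ zz, F (zz, t) ∂Pz) ((∑ i, F (zv i, t)) / κ))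
                (1 - α)
              ≤ ENNReal.ofReal (c / κ)} := by
  obtain ⟨hα0, -⟩ := hα
  obtain ⟨hδ0, -⟩ := hδ
  have hr0 := hr.1
  refine ⟨⌈1 / (α * δ * r) / r⌉₊, 1 / (α * δ * r), by positivity, ?_⟩
  intro Ψ _ Z _ Pq Pz _ _ F hF hF01 hμ κ hκ
  have hcκ : 1 / (α * δ * r) ≤ κ * r :=
    (div_le_iff₀ hr0).mp ((Nat.le_ceil _).trans (by exact_mod_cast hκ))
  have hμF : Measurable fun t => ∫ zz, F (zz, t) ∂Pz :=
    hF.stronglyMeasurable.integral_prod_left'.measurable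
  refine le_measure_quantileE_le _ Pq ((hμF.comp measurable_snd).chiDiv (by fun_prop)) hα0 hδ0.le
    fun t => ?_
  calc _ ≤ ENNReal.ofReal (1 / (1 / (α * δ * r) * r)) :=
        measure_lt_chiDiv_empiricalMean_le Pz (by fun_prop) (fun _ => hF01 _) (hμ t)
          (by positivity) hcκ
    _ = ENNReal.ofReal (α * δ) := by
        congr 1
        field_simp
end

section
/- Fix q ∈ (0,1) and let x_1,…,x_k be i.i.d. Bernoulli(q) with sample mean x̄_k = (1/k)Σ_{i=1}^k x_i. Then for every α ∈ (0,1): P(KL(x̄_k ‖ q) ≤ log(2/α)/k) ≥ 1 − α. -/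
/-!
Chernoff's bound with the optimal exponential tilt gives `P(x̄ ≥ a) ≤ exp (-k KL(a‖q))` for
`q < a < 1`. As `KL(·‖q)` is continuous and increasing on `[q, 1]`, the event
`{x̄ ≥ q, KL(x̄‖q) > c}` is either empty or contained in `{x̄ ≥ a}` for the `a` with
`KL(a‖q) = c`, so it has probability at most `exp (-k c)`; symmetrically below `q`.
For `c = log (2/α) / k` the two sides have total probability at most `α`.
-/

open MeasureTheory ProbabilityTheory
open scoped ENNReal

/-- Bernoulli distribution on `ℝ` with mean `p`. -/
noncomputable def bern (p : ℝ) : Measure ℝ :=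
  ENNReal.ofReal p • Measure.dirac 1 + ENNReal.ofReal (1 - p) • Measure.dirac 0

/-- Kullback–Leibler divergence between Bernoulli distributions `Ber(q)` and `Ber(p)`,
with the convention `0 * log 0 = 0` (automatic in Lean since `Real.log 0 = 0`). -/
noncomputable def klBer (q p : ℝ) : ℝ :=
  q * Real.log (q / p) + (1 - q) * Real.log ((1 - q) / (1 - p))

open Real Set

section Bernoulli

variable {p : ℝ}

instance isFiniteMeasure_bern (p : ℝ) : IsFiniteMeasure (bern p) := by
  constructor
  simp [bern]

lemma isProbabilityMeasure_bern (h0 : 0 ≤ p) (h1 : p ≤ 1) : IsProbabilityMeasure (bern p) := by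
  constructor
  simp [bern, ← ENNReal.ofReal_add h0 (sub_nonneg.2 h1)]

lemma ae_bern_mem_Icc : ∀ᵐ x ∂bern p, x ∈ Icc (0 : ℝ) 1 := by
  rw [ae_iff]
  simp [bern]

lemma integral_bern (h0 : 0 ≤ p) (h1 : p ≤ 1) (f : ℝ → ℝ) :
    ∫ x, f x ∂bern p = p * f 1 + (1 - p) * f 0 := by
  have hf (a : ℝ) : Integrable f (Measure.dirac a) := integrable_dirac enorm_lt_top
  rw [bern, integral_add_measure ((hf 1).smul_measure ENNReal.ofReal_ne_top)
    ((hf 0).smul_measure ENNReal.ofReal_ne_top), integral_smul_measure, integral_smul_measure,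
    integral_dirac, integral_dirac, ENNReal.toReal_ofReal h0,
    ENNReal.toReal_ofReal (sub_nonneg.2 h1), smul_eq_mul, smul_eq_mul]

lemma map_one_sub_bern : (bern p).map (fun x => 1 - x) = bern (1 - p) := by
  have hm : Measurable fun x : ℝ => 1 - x := by fun_prop
  rw [bern, bern, Measure.map_add _ _ hm, Measure.map_smul, Measure.map_smul,
    Measure.map_dirac' hm, Measure.map_dirac' hm, sub_sub_cancel, sub_self, sub_zero, add_comm]

end Bernoulli

section BernoulliProduct

variable {ι : Type*} [Fintype ι] {p : ℝ}

lemma ae_pi_bern_sum_mem_Icc :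
    ∀ᵐ (f : ι → ℝ) ∂(Measure.pi fun _ => bern p), ∑ i, f i ∈ Icc 0 (Fintype.card ι : ℝ) := by
  have hcoord : ∀ᵐ (f : ι → ℝ) ∂(Measure.pi fun _ => bern p), ∀ i, f i ∈ Icc (0 : ℝ) 1 :=
    ae_all_iff.2 fun _ => Measure.tendsto_eval_ae_ae.eventually ae_bern_mem_Icc
  filter_upwards [hcoord] with f hf
  refine ⟨Finset.sum_nonneg fun i _ => (hf i).1, ?_⟩
  calc ∑ i, f i ≤ ∑ _i : ι, (1 : ℝ) := Finset.sum_le_sum fun i _ => (hf i).2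
    _ = Fintype.card ι := by simp

lemma ae_pi_bern_mean_mem_Icc :
    ∀ᵐ (f : ι → ℝ) ∂(Measure.pi fun _ => bern p), (∑ i, f i) / Fintype.card ι ∈ Icc (0 : ℝ) 1 := by
  filter_upwards [ae_pi_bern_sum_mem_Icc] with f ⟨h0, h1⟩
  exact ⟨div_nonneg h0 (Nat.cast_nonneg _), div_le_one_of_le₀ h1 (Nat.cast_nonneg _)⟩

lemma integrable_exp_mul_sum_pi_bern (t : ℝ) :
    Integrable (fun f : ι → ℝ => exp (t * ∑ i, f i)) (Measure.pi fun _ => bern p) := by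
  refine .of_bound (by fun_prop) (exp (|t| * Fintype.card ι)) ?_
  filter_upwards [ae_pi_bern_sum_mem_Icc] with f ⟨h0, h1⟩
  rw [norm_of_nonneg (exp_pos _).le, exp_le_exp]
  calc t * ∑ i, f i ≤ |t| * ∑ i, f i := mul_le_mul_of_nonneg_right (le_abs_self t) h0
    _ ≤ |t| * Fintype.card ι := mul_le_mul_of_nonneg_left h1 (abs_nonneg t)

lemma mgf_sum_pi_bern (h0 : 0 ≤ p) (h1 : p ≤ 1) (t : ℝ) :
    mgf (fun f : ι → ℝ => ∑ i, f i) (Measure.pi fun _ => bern p) t =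
      (p * exp t + (1 - p)) ^ Fintype.card ι := by
  simp_rw [mgf, Finset.mul_sum, exp_sum]
  rw [integral_fintype_prod_eq_pow (fun x => exp (t * x)), integral_bern h0 h1]
  simp

end BernoulliProduct

section KL

variable {q : ℝ}

lemma mul_log_div (x : ℝ) {y : ℝ} (hy : y ≠ 0) : x * log (x / y) = x * log x - x * log y := by
  rcases eq_or_ne x 0 with rfl | hx
  · simp
  · rw [log_div hx hy]; ring

lemma klBer_eq_sub (hq0 : q ≠ 0) (hq1 : q ≠ 1) (u : ℝ) :
    klBer u q = u * log u + (1 - u) * log (1 - u) - (u * log q + (1 - u) * log (1 - q)) := by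
  rw [klBer, mul_log_div u hq0, mul_log_div (1 - u) (sub_ne_zero.2 hq1.symm)]
  ring

lemma klBer_self (hq0 : q ≠ 0) (hq1 : q ≠ 1) : klBer q q = 0 := by
  simp [klBer, div_self hq0, div_self (sub_ne_zero.2 hq1.symm)]

lemma klBer_one_sub (u q : ℝ) : klBer (1 - u) (1 - q) = klBer u q := by
  rw [klBer, klBer, sub_sub_cancel, sub_sub_cancel]
  ring

lemma continuous_klBer_left (hq0 : q ≠ 0) (hq1 : q ≠ 1) : Continuous (klBer · q) := by
  simp_rw [klBer_eq_sub hq0 hq1]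
  have hmul_log := continuous_mul_log
  fun_prop

lemma hasDerivAt_klBer_left (hq0 : q ≠ 0) (hq1 : q ≠ 1) {u : ℝ} (hu0 : 0 < u) (hu1 : u < 1) :
    HasDerivAt (klBer · q) (log u - log (1 - u) - (log q - log (1 - q))) u := by
  rw [show (klBer · q) = _ from funext (klBer_eq_sub hq0 hq1)]
  have hlog := hasDerivAt_mul_log hu0.ne'
  have hlog_one_sub := (hasDerivAt_mul_log (sub_pos.2 hu1).ne').comp u
    ((hasDerivAt_id u).const_sub 1)
  have hlin := ((hasDerivAt_id u).mul_const (log q)).add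
    (((hasDerivAt_id u).const_sub 1).mul_const (log (1 - q)))
  exact ((hlog.add hlog_one_sub).sub hlin).congr_deriv (by ring)

lemma monotoneOn_klBer_left (hq0 : 0 < q) (hq1 : q < 1) :
    MonotoneOn (klBer · q) (Icc q 1) := by
  refine monotoneOn_of_hasDerivWithinAt_nonneg
    (f' := fun u => log u - log (1 - u) - (log q - log (1 - q))) (convex_Icc q 1)
    (continuous_klBer_left hq0.ne' hq1.ne).continuousOn
    (fun u hu => ?_) (fun u hu => ?_) <;> rw [interior_Icc] at hu
  · exact (hasDerivAt_klBer_left hq0.ne' hq1.ne (hq0.trans hu.1) hu.2).hasDerivWithinAt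
  · have hlog : log q ≤ log u := log_le_log hq0 hu.1.le
    have hlog_one_sub : log (1 - u) ≤ log (1 - q) :=
      log_le_log (by linarith [hu.2]) (by linarith [hu.1])
    linarith

lemma exists_klBer_eq (hq0 : 0 < q) (hq1 : q < 1) {c : ℝ} (hc0 : 0 < c) (hc1 : c < klBer 1 q) :
    ∃ a ∈ Ioo q 1, klBer a q = c := by
  have hself := klBer_self hq0.ne' hq1.ne
  obtain ⟨a, ⟨hqa, ha1⟩, rfl⟩ := intermediate_value_Icc hq1.le
    (continuous_klBer_left hq0.ne' hq1.ne).continuousOn (show c ∈ _ from ⟨hself ▸ hc0.le, hc1.le⟩)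
  refine ⟨a, ⟨hqa.lt_of_ne ?_, ha1.lt_of_ne ?_⟩, rfl⟩ <;> rintro rfl <;> linarith

end KL

section Chernoff

variable {ι : Type*} [Fintype ι] {q a : ℝ}

/-- The exponential tilt `t` minimising `t ↦ -t a + log (q eᵗ + 1 - q)`. -/
noncomputable def chernoffTilt (a q : ℝ) : ℝ := log (a * (1 - q) / (q * (1 - a)))

lemma exp_neg_chernoffTilt_mul_mul_eq_exp_neg_klBer (hq0 : 0 < q) (hq1 : q < 1) (ha0 : 0 < a)
    (ha1 : a < 1) :
    exp (-chernoffTilt a q * a) * (q * exp (chernoffTilt a q) + (1 - q)) = exp (-klBer a q) := by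
  have h1a : 0 < 1 - a := sub_pos.2 ha1
  have h1q : 0 < 1 - q := sub_pos.2 hq1
  have hmgf : q * exp (chernoffTilt a q) + (1 - q) = exp (log (1 - q) - log (1 - a)) := by
    rw [chernoffTilt, exp_log (by positivity), exp_sub, exp_log h1q, exp_log h1a]
    field_simp
    ring
  rw [hmgf, ← exp_add, klBer, chernoffTilt, log_div (by positivity) (by positivity),
    log_mul ha0.ne' h1q.ne', log_mul hq0.ne' h1a.ne', log_div ha0.ne' hq0.ne',
    log_div h1a.ne' h1q.ne']
  ring_nf

lemma measureReal_sum_ge_le_exp_neg_klBer (hq0 : 0 < q) (ha : a ∈ Ioo q 1) :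
    (Measure.pi fun _ : ι => bern q).real {f | Fintype.card ι * a ≤ ∑ i, f i} ≤
      exp (-(Fintype.card ι * klBer a q)) := by
  obtain ⟨hqa, ha1⟩ := ha
  have hq1 : q < 1 := hqa.trans ha1
  have ht : 0 ≤ chernoffTilt a q := by
    refine log_nonneg ((one_le_div (by nlinarith)).2 ?_)
    nlinarith
  calc _ ≤ exp (-chernoffTilt a q * (Fintype.card ι * a)) *
          mgf (fun f : ι → ℝ => ∑ i, f i) (Measure.pi fun _ => bern q) (chernoffTilt a q) :=
        measure_ge_le_exp_mul_mgf _ ht (integrable_exp_mul_sum_pi_bern _)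
    _ = (exp (-chernoffTilt a q * a) * (q * exp (chernoffTilt a q) + (1 - q))) ^
          Fintype.card ι := by
        rw [mgf_sum_pi_bern hq0.le hq1.le _, mul_pow, ← exp_nat_mul]
        ring_nf
    _ = exp (-(Fintype.card ι * klBer a q)) := by
        rw [exp_neg_chernoffTilt_mul_mul_eq_exp_neg_klBer hq0 hq1 (hq0.trans hqa) ha1,
          ← exp_nat_mul]
        ring_nf

end Chernoff

section KLTail

variable {ι : Type*} [Fintype ι] {q c : ℝ}

lemma measureReal_upper_klBer_tail_le [Nonempty ι] (hq0 : 0 < q) (hq1 : q < 1) (hc : 0 < c) :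
    (Measure.pi fun _ : ι => bern q).real
        {f | (∑ i, f i) / Fintype.card ι ∈ Icc q 1 ∧ c < klBer ((∑ i, f i) / Fintype.card ι) q} ≤
      exp (-(Fintype.card ι * c)) := by
  have hmono := monotoneOn_klBer_left hq0 hq1
  have hright : (1 : ℝ) ∈ Icc q 1 := ⟨hq1.le, le_rfl⟩
  rcases lt_or_ge c (klBer 1 q) with hc1 | hc1
  · obtain ⟨a, ha, rfl⟩ := exists_klBer_eq hq0 hq1 hc hc1
    have hsub : {f : ι → ℝ | (∑ i, f i) / Fintype.card ι ∈ Icc q 1 ∧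
          klBer a q < klBer ((∑ i, f i) / Fintype.card ι) q} ⊆
        {f | Fintype.card ι * a ≤ ∑ i, f i} := by
      rintro f ⟨hmean, hkl⟩
      rw [mem_ofPred_eq, ← le_div_iff₀' (by positivity)]
      by_contra! hlt
      exact (hmono hmean ⟨ha.1.le, ha.2.le⟩ hlt.le).not_gt hkl
    exact (measureReal_mono hsub).trans (measureReal_sum_ge_le_exp_neg_klBer hq0 ha)
  · have hempty : {f : ι → ℝ | (∑ i, f i) / Fintype.card ι ∈ Icc q 1 ∧
        c < klBer ((∑ i, f i) / Fintype.card ι) q} = ∅ := by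
      refine eq_empty_of_forall_notMem fun f ⟨hmean, hkl⟩ => ?_
      linarith [hmono hmean hright hmean.2]
    rw [hempty, measureReal_empty]
    positivity

/-- The lower tail reduces to the upper one under the reflection `x ↦ 1 - x`, which swaps
`bern q` and `bern (1 - q)` and preserves `klBer`. -/
lemma measureReal_lower_klBer_tail_le [Nonempty ι] (hq0 : 0 < q) (hq1 : q < 1) (hc : 0 < c) :
    (Measure.pi fun _ : ι => bern q).real
        {f | (∑ i, f i) / Fintype.card ι ∈ Icc 0 q ∧ c < klBer ((∑ i, f i) / Fintype.card ι) q} ≤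
      exp (-(Fintype.card ι * c)) := by
  set reflect : (ι → ℝ) → ι → ℝ := fun f i => 1 - f i
  have hmap : (Measure.pi fun _ : ι => bern q).map reflect = Measure.pi fun _ => bern (1 - q) := by
    rw [Measure.pi_map_pi fun _ => by fun_prop]
    simp_rw [map_one_sub_bern]
  have hmean (f : ι → ℝ) :
      (∑ i, reflect f i) / Fintype.card ι = 1 - (∑ i, f i) / Fintype.card ι := by
    simp only [reflect, Finset.sum_sub_distrib, Finset.sum_const, Finset.card_univ, nsmul_one]
    field_simp
  have hsub : {f : ι → ℝ | (∑ i, f i) / Fintype.card ι ∈ Icc 0 q ∧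
        c < klBer ((∑ i, f i) / Fintype.card ι) q} ⊆ reflect ⁻¹'
      {f | (∑ i, f i) / Fintype.card ι ∈ Icc (1 - q) 1 ∧
        c < klBer ((∑ i, f i) / Fintype.card ι) (1 - q)} := by
    rintro f ⟨⟨h0, hq⟩, hkl⟩
    simp only [mem_preimage, mem_ofPred_eq, hmean, klBer_one_sub]
    exact ⟨⟨by linarith, by linarith⟩, hkl⟩
  calc _ ≤ (Measure.pi fun _ : ι => bern q).real (reflect ⁻¹' _) := measureReal_mono hsub
    _ ≤ ((Measure.pi fun _ : ι => bern q).map reflect).real _ :=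
        ENNReal.toReal_mono (measure_ne_top _ _) (Measure.le_map_apply (by fun_prop) _)
    _ ≤ _ := by
        rw [hmap]
        exact measureReal_upper_klBer_tail_le (by linarith) (by linarith) hc

lemma measureReal_klBer_mean_gt_le [Nonempty ι] (hq0 : 0 < q) (hq1 : q < 1) (hc : 0 < c) :
    (Measure.pi fun _ : ι => bern q).real {f | c < klBer ((∑ i, f i) / Fintype.card ι) q} ≤
      2 * exp (-(Fintype.card ι * c)) := by
  calc _ ≤ (Measure.pi fun _ : ι => bern q).real
        ({f | (∑ i, f i) / Fintype.card ι ∈ Icc q 1 ∧ c < klBer ((∑ i, f i) / Fintype.card ι) q} ∪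
          {f | (∑ i, f i) / Fintype.card ι ∈ Icc 0 q ∧
            c < klBer ((∑ i, f i) / Fintype.card ι) q}) := by
        refine ENNReal.toReal_mono (measure_ne_top _ _) (measure_mono_ae ?_)
        filter_upwards [ae_pi_bern_mean_mem_Icc] with f ⟨h0, h1⟩ hf
        rcases le_total q ((∑ i, f i) / Fintype.card ι) with hqm | hmq
        exacts [Or.inl ⟨⟨hqm, h1⟩, hf⟩, Or.inr ⟨⟨h0, hmq⟩, hf⟩]
    _ ≤ exp (-(Fintype.card ι * c)) + exp (-(Fintype.card ι * c)) :=
        (measureReal_union_le _ _).trans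
          (add_le_add (measureReal_upper_klBer_tail_le hq0 hq1 hc)
            (measureReal_lower_klBer_tail_le hq0 hq1 hc))
    _ = 2 * exp (-(Fintype.card ι * c)) := (two_mul _).symm

end KLTail

theorem stmt8_general (q : ℝ) (hq : q ∈ Set.Ioo (0 : ℝ) 1) (k : ℕ) (hk : 1 ≤ k)
    {Ω : Type*} [MeasurableSpace Ω] (P : Measure Ω)
    (x : Fin k → Ω → ℝ)
    (hlaw : Measure.map (fun ω => fun i => x i ω) P = Measure.pi fun _ : Fin k => bern q)
    (α : ℝ) (hα : α ∈ Set.Ioo (0 : ℝ) 1) :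
    ENNReal.ofReal (1 - α) ≤
      P {ω | klBer ((∑ i, x i ω) / k) q ≤ Real.log (2 / α) / k} := by
  obtain ⟨hq0, hq1⟩ := hq
  obtain ⟨hα0, hα1⟩ := hα
  have : NeZero k := ⟨by omega⟩
  have := isProbabilityMeasure_bern hq0.le hq1.le
  set μ := Measure.pi fun _ : Fin k => bern q
  set c := log (2 / α) / k
  have hc : 0 < c := div_pos (log_pos ((lt_div_iff₀ hα0).2 (by linarith))) (by positivity)
  have hexp : exp (-(k * c)) = α / 2 := by
    rw [show (k : ℝ) * c = log (2 / α) from mul_div_cancel₀ _ (by positivity), ← log_inv, inv_div,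
      exp_log (by positivity)]
  set B := {f : Fin k → ℝ | klBer ((∑ i, f i) / k) q ≤ c}
  have hB : MeasurableSet B :=
    measurableSet_le ((continuous_klBer_left hq0.ne' hq1.ne).measurable.comp (by fun_prop))
      measurable_const
  have hPB : P {ω | klBer ((∑ i, x i ω) / k) q ≤ c} = μ B := by
    rw [← hlaw, Measure.map_apply_of_aemeasurable (.of_map_ne_zero (hlaw ▸ NeZero.ne _)) hB]
    rfl
  have hcompl : μ.real Bᶜ ≤ 2 * exp (-(k * c)) := by
    simpa only [B, compl_ofPred, not_le, Fintype.card_fin] using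
      measureReal_klBer_mean_gt_le (ι := Fin k) hq0 hq1 hc
  rw [hPB]
  refine ENNReal.ofReal_le_of_le_toReal ?_
  linarith [probReal_compl_eq_one_sub (μ := μ) hB, measureReal_def μ B]

/-- Chernoff bound for Bernoulli sample means in KL form. -/
theorem stmt8 (q : ℝ) (hq : q ∈ Set.Ioo (0 : ℝ) 1) (k : ℕ) (hk : 1 ≤ k)
    {Ω : Type*} [MeasurableSpace Ω] (P : Measure Ω) [IsProbabilityMeasure P]
    (x : Fin k → Ω → ℝ)
    (hlaw : Measure.map (fun ω => fun i => x i ω) P = Measure.pi fun _ : Fin k => bern q)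
    (α : ℝ) (hα : α ∈ Set.Ioo (0 : ℝ) 1) :
    ENNReal.ofReal (1 - α) ≤
      P {ω | klBer ((∑ i, x i ω) / k) q ≤ Real.log (2 / α) / k} :=
  stmt8_general q hq k hk P x hlaw α hα
end

section
/- For every x ∈ (0,1) and every b > 0, the Bernoulli KL-divergence ball {p ∈ (0,1) : KL(x ‖ p) ≤ b} is contained in the interval [x − R, x + R], where R = √(2x(1−x)b) + 2b. -/
open Real Set

lemma mul_log_div_eq_sub (a : ℝ) {p : ℝ} (hp : p ≠ 0) :
    a * log (a / p) = a * log a - a * log p := by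
  rcases eq_or_ne a 0 with rfl | ha
  · simp
  · rw [log_div ha hp, mul_sub]

lemma klBer_self_s9 (x : ℝ) : klBer x x = 0 := by
  simp [klBer]

lemma klBer_one_sub_one_sub (x p : ℝ) : klBer (1 - x) (1 - p) = klBer x p := by
  simp only [klBer, sub_sub_cancel]
  ring

lemma hasDerivAt_klBer (x : ℝ) {t : ℝ} (ht₀ : t ≠ 0) (ht₁ : t ≠ 1) :
    HasDerivAt (klBer x) ((t - x) / (t * (1 - t))) t := by
  have ht₁' : 1 - t ≠ 0 := sub_ne_zero.2 ht₁.symm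
  have hlog : HasDerivAt (fun p => x * log x - x * log p
      + ((1 - x) * log (1 - x) - (1 - x) * log (1 - p)))
      (-(x * t⁻¹) + -((1 - x) * (-1 / (1 - t)))) t :=
    (((hasDerivAt_log ht₀).const_mul x).const_sub _).add
      ((((hasDerivAt_id t).const_sub 1).log ht₁').const_mul (1 - x) |>.const_sub _)
  refine (hlog.congr_deriv (by field_simp; ring)).congr_of_eventuallyEq ?_
  filter_upwards [isOpen_ne.mem_nhds ht₀, isOpen_ne.mem_nhds ht₁] with p hp₀ hp₁
  rw [klBer, mul_log_div_eq_sub x hp₀, mul_log_div_eq_sub (1 - x) (sub_ne_zero.2 hp₁.symm)]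

lemma mul_one_sub_le_add_abs_sub {t x : ℝ} (ht : t ∈ Icc (0 : ℝ) 1) (hx : x ∈ Icc (0 : ℝ) 1) :
    t * (1 - t) ≤ x * (1 - x) + |t - x| := by
  have h : |1 - t - x| ≤ 1 := abs_le.2 ⟨by linarith [ht.2, hx.2], by linarith [ht.1, hx.1]⟩
  calc t * (1 - t) = x * (1 - x) + (t - x) * (1 - t - x) := by ring
    _ ≤ x * (1 - x) + |t - x| := by
      gcongr
      exact (le_abs_self _).trans <| (abs_mul _ _).trans_le <|
        mul_le_of_le_one_right (abs_nonneg _) h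

lemma sq_div_le_klBer_of_le {x p : ℝ} (hx : x ∈ Ioo (0 : ℝ) 1) (hp : p < 1) (hxp : x ≤ p) :
    (p - x) ^ 2 / (2 * (x * (1 - x) + (p - x))) ≤ klBer x p := by
  set V := x * (1 - x) + (p - x)
  have hsub : Icc x p ⊆ Ioo 0 1 := Icc_subset_Ioo hx.1 hp
  have hderiv : ∀ t ∈ Icc x p, HasDerivAt (fun t => klBer x t - (t - x) ^ 2 / (2 * V))
      ((t - x) / (t * (1 - t)) - (t - x) / V) t := fun t ht => by
    have := ((hasDerivAt_id t).sub_const x).pow 2 |>.div_const (2 * V)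
    refine (hasDerivAt_klBer x (hsub ht).1.ne' (hsub ht).2.ne).sub (this.congr_deriv ?_)
    field_simp
    simp
  have hmono : MonotoneOn (fun t => klBer x t - (t - x) ^ 2 / (2 * V)) (Icc x p) := by
    refine monotoneOn_of_hasDerivWithinAt_nonneg (convex_Icc x p)
      (fun t ht => (hderiv t ht).continuousAt.continuousWithinAt)
      (fun t ht => (hderiv t (interior_subset ht)).hasDerivWithinAt) fun t ht => ?_
    rw [interior_Icc] at ht
    obtain ⟨ht₀, ht₁⟩ := hsub (Ioo_subset_Icc_self ht)
    have hvar : t * (1 - t) ≤ V := by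
      have := mul_one_sub_le_add_abs_sub ⟨ht₀.le, ht₁.le⟩ ⟨hx.1.le, hx.2.le⟩
      rw [abs_of_nonneg (sub_nonneg.2 ht.1.le)] at this
      linarith [ht.2]
    exact sub_nonneg.2 <| div_le_div_of_nonneg_left (sub_nonneg.2 ht.1.le) (by nlinarith) hvar
  simpa [klBer_self_s9] using hmono ⟨le_rfl, hxp⟩ ⟨hxp, le_rfl⟩ hxp

lemma sq_div_le_klBer {x p : ℝ} (hx : x ∈ Ioo (0 : ℝ) 1) (hp : p ∈ Ioo (0 : ℝ) 1) :
    |p - x| ^ 2 / (2 * (x * (1 - x) + |p - x|)) ≤ klBer x p := by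
  wlog hxp : x ≤ p generalizing x p
  · have h := this (x := 1 - x) (p := 1 - p) ⟨by linarith [hx.2], by linarith [hx.1]⟩
      ⟨by linarith [hp.2], by linarith [hp.1]⟩ (by linarith)
    rwa [klBer_one_sub_one_sub, sub_sub_sub_cancel_left, abs_sub_comm, sub_sub_cancel,
      mul_comm (1 - x)] at h
  rw [abs_of_nonneg (sub_nonneg.2 hxp)]
  exact sq_div_le_klBer_of_le hx hp.2 hxp

lemma le_sqrt_add_of_sq_le {d v b : ℝ} (hv : 0 ≤ v) (hb : 0 ≤ b) (h : d ^ 2 ≤ 2 * b * (v + d)) :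
    d ≤ √(2 * v * b) + 2 * b := by
  set s := √(2 * v * b)
  have hs : s ^ 2 = 2 * v * b := sq_sqrt (by positivity)
  by_contra! hd
  nlinarith [sqrt_nonneg (2 * v * b),
    mul_pos (by linarith : 0 < d - s) (by linarith : 0 < d - 2 * b - s)]

/-- the KL-divergence ball is contained in an empirical-Bernstein-type interval. -/
theorem stmt9 (x b : ℝ) (hx : x ∈ Set.Ioo (0 : ℝ) 1) (hb : 0 < b) :
    {p ∈ Set.Ioo (0 : ℝ) 1 | klBer x p ≤ b} ⊆
      Set.Icc (x - (Real.sqrt (2 * (x * (1 - x)) * b) + 2 * b))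
              (x + (Real.sqrt (2 * (x * (1 - x)) * b) + 2 * b)) := by
  rintro p ⟨hp, hkl⟩
  have hv : 0 < x * (1 - x) := mul_pos hx.1 (sub_pos.2 hx.2)
  have hsq : |p - x| ^ 2 ≤ 2 * b * (x * (1 - x) + |p - x|) := by
    have := (sq_div_le_klBer hx hp).trans hkl
    rw [div_le_iff₀ (by positivity)] at this
    linarith
  have := abs_sub_le_iff.1 (le_sqrt_add_of_sq_le hv.le hb.le hsq)
  constructor <;> linarith [this.1, this.2]
end

section
/- Fix α, δ ∈ (0,1). There exists a constant c' = c'(α,δ) > 0, depending only on α and δ, such that for every integer κ ≥ 1: P^{⊗κ}({z ∈ Z^κ : q^{KL}_{1−α}(z) ≤ c'/κ}) ≥ 1 − δ. -/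
open MeasureTheory
open scoped ENNReal

universe u v

/-- Extended Bernoulli KL divergence on `[0,1]`, with `KL(q ‖ p) = ∞` when `p ∈ {0,1}`, `q ≠ p`. -/
noncomputable def klBerE (q p : ℝ) : ℝ≥0∞ :=
  if (p = 0 ∧ q ≠ 0) ∨ (p = 1 ∧ q ≠ 1) then ⊤ else ENNReal.ofReal (klBer q p)

/-! For a fixed question `t`, the Bernoulli KL divergence is dominated by the χ² divergence
`(μ̂ - μ)² / (μ (1 - μ))`, and the variance of an empirical mean of `κ` i.i.d. `[0,1]`-valued
variables is at most `μ (1 - μ) / κ`; hence `𝔼_z Δ_z(t) ≤ 1/κ` (if `μ(t) ∈ {0,1}`, then `μ̂ = μ`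
almost surely and `Δ = 0`). By Tonelli, `𝔼_z ∫ Δ_z dΠ ≤ 1/κ`. Markov's inequality in `z` gives
`∫ Δ_z dΠ ≤ 1/(δκ)` with probability `≥ 1 - δ`, and Markov's inequality in `t` then gives
`Π(Δ_z > 1/(αδκ)) ≤ α`, so `c' = 1/(αδ)` works. -/

open ProbabilityTheory

lemma klBer_le_chisq {q p : ℝ} (hq0 : 0 ≤ q) (hq1 : q ≤ 1) (hp0 : 0 < p) (hp1 : p < 1) :
    klBer q p ≤ (q - p) ^ 2 / (p * (1 - p)) := by
  have hp1' : 0 < 1 - p := sub_pos.mpr hp1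
  have mul_log_le (a b : ℝ) (ha : 0 ≤ a) (hb : 0 < b) :
      a * Real.log (a / b) ≤ a * (a / b - 1) := by
    rcases ha.eq_or_lt with rfl | ha
    · simp
    · exact mul_le_mul_of_nonneg_left (Real.log_le_sub_one_of_pos (div_pos ha hb)) ha.le
  calc klBer q p ≤ q * (q / p - 1) + (1 - q) * ((1 - q) / (1 - p) - 1) :=
        add_le_add (mul_log_le q p hq0 hp0) (mul_log_le _ _ (sub_nonneg.mpr hq1) hp1')
    _ = (q - p) ^ 2 / (p * (1 - p)) := by
        field_simp
        ring

lemma klBerE_self (p : ℝ) : klBerE p p = 0 := by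
  simp [klBerE, klBer]

lemma klBerE_of_mem_Ioo {p : ℝ} (hp : p ∈ Set.Ioo (0 : ℝ) 1) (q : ℝ) :
    klBerE q p = ENNReal.ofReal (klBer q p) :=
  if_neg (by rintro (⟨h, -⟩ | ⟨h, -⟩) <;> linarith [hp.1, hp.2])

lemma measurable_klBerE : Measurable (fun qp : ℝ × ℝ => klBerE qp.1 qp.2) := by
  unfold klBerE klBer
  refine Measurable.ite ?_ measurable_const (by fun_prop)
  exact ((measurableSet_eq_fun measurable_snd measurable_const).inter
      (measurableSet_eq_fun measurable_fst measurable_const).compl).union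
    ((measurableSet_eq_fun measurable_snd measurable_const).inter
      (measurableSet_eq_fun measurable_fst measurable_const).compl)

lemma ofReal_one_sub_le_measure_le_of_lintegral_le {α : Type*} [MeasurableSpace α]
    {μ : Measure α} [IsProbabilityMeasure μ] {f : α → ℝ≥0∞} (hf : AEMeasurable f μ)
    {ε c : ℝ} (hε : 0 ≤ ε) (hc : 0 < c) (h : ∫⁻ x, f x ∂μ ≤ ENNReal.ofReal (c * ε)) :
    ENNReal.ofReal (1 - ε) ≤ μ {x | f x ≤ ENNReal.ofReal c} := by
  have markov : μ {x | ENNReal.ofReal c < f x} ≤ ENNReal.ofReal ε :=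
    calc μ {x | ENNReal.ofReal c < f x} ≤ μ {x | ENNReal.ofReal c ≤ f x} :=
          measure_mono fun _ hx => le_of_lt (α := ℝ≥0∞) hx
      _ ≤ (∫⁻ x, f x ∂μ) / ENNReal.ofReal c :=
          meas_ge_le_lintegral_div hf (by simpa using hc) ENNReal.ofReal_ne_top
      _ ≤ ENNReal.ofReal (c * ε) / ENNReal.ofReal c := by gcongr
      _ = ENNReal.ofReal ε := by
          rw [ENNReal.ofReal_mul hc.le, mul_comm, ENNReal.mul_div_cancel_right
            (by simpa using hc) ENNReal.ofReal_ne_top]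
  have hcompl : {x | f x ≤ ENNReal.ofReal c} = {x | ENNReal.ofReal c < f x}ᶜ := by
    ext x; simp
  rw [hcompl, prob_compl_eq_one_sub₀ (nullMeasurableSet_lt aemeasurable_const hf),
    ENNReal.ofReal_sub _ hε, ENNReal.ofReal_one]
  exact tsub_le_tsub_left markov 1

noncomputable def empiricalMean {Z : Type*} {κ : ℕ} (Y : Z → ℝ) (z : Fin κ → Z) : ℝ :=
  (∑ i, Y (z i)) / κ

lemma empiricalMean_mem_Icc {Z : Type*} {Y : Z → ℝ} {κ : ℕ}
    (h01 : ∀ x, Y x ∈ Set.Icc (0 : ℝ) 1) (z : Fin κ → Z) :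
    empiricalMean Y z ∈ Set.Icc (0 : ℝ) 1 := by
  rcases κ.eq_zero_or_pos with rfl | hκ
  · simp [empiricalMean]
  have hκR : (0 : ℝ) < κ := by exact_mod_cast hκ
  refine ⟨div_nonneg (Finset.sum_nonneg fun i _ => (h01 (z i)).1) hκR.le,
    (div_le_one hκR).mpr ?_⟩
  calc ∑ i, Y (z i) ≤ ∑ _i : Fin κ, (1 : ℝ) := Finset.sum_le_sum fun i _ => (h01 (z i)).2
    _ = κ := by simp

section EmpiricalMean

variable {Z : Type*} [MeasurableSpace Z] {Pz : Measure Z} [IsProbabilityMeasure Pz]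
  {Y : Z → ℝ} {κ : ℕ}

lemma measurable_empiricalMean (hY : Measurable Y) : Measurable (empiricalMean (κ := κ) Y) := by
  unfold empiricalMean
  fun_prop

lemma integral_empiricalMean (hκ : κ ≠ 0) (hY : Integrable Y Pz) :
    ∫ z, empiricalMean Y z ∂(Measure.pi fun _ : Fin κ => Pz) = ∫ x, Y x ∂Pz := by
  unfold empiricalMean
  rw [integral_div, integral_finsetSum _ fun i _ => integrable_comp_eval hY]
  simp only [integral_comp_eval (μ := fun _ : Fin κ => Pz) hY.aestronglyMeasurable,
    Finset.sum_const, Finset.card_univ, Fintype.card_fin, nsmul_eq_mul]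
  field_simp

lemma variance_empiricalMean_le (hY : AEMeasurable Y Pz)
    (h01 : ∀ᵐ x ∂Pz, Y x ∈ Set.Icc (0 : ℝ) 1) :
    Var[empiricalMean Y; Measure.pi fun _ : Fin κ => Pz]
      ≤ (∫ x, Y x ∂Pz) * (1 - ∫ x, Y x ∂Pz) / κ := by
  have hsum :
      empiricalMean Y = fun z => (κ : ℝ)⁻¹ * (∑ i, fun z : Fin κ → Z => Y (z i)) z := by
    ext z
    simp [empiricalMean, Finset.sum_apply, div_eq_inv_mul]
  rw [hsum, variance_const_mul,
    variance_sum_pi fun _ => memLp_of_bounded h01 hY.aestronglyMeasurable 2]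
  calc ((κ : ℝ)⁻¹) ^ 2 * ∑ _i : Fin κ, Var[Y; Pz]
      = Var[Y; Pz] / κ := by
        rcases κ.eq_zero_or_pos with rfl | hκ
        · simp
        · simp only [Finset.sum_const, Finset.card_univ, Fintype.card_fin, nsmul_eq_mul]
          field_simp
    _ ≤ (∫ x, Y x ∂Pz) * (1 - ∫ x, Y x ∂Pz) / κ := by
        gcongr
        simpa [mul_comm] using variance_le_sub_mul_sub h01 hY

lemma integral_sq_empiricalMean_sub_le (hκ : κ ≠ 0) (hY : Measurable Y)
    (h01 : ∀ x, Y x ∈ Set.Icc (0 : ℝ) 1) :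
    ∫ z, (empiricalMean Y z - ∫ x, Y x ∂Pz) ^ 2 ∂(Measure.pi fun _ : Fin κ => Pz)
      ≤ (∫ x, Y x ∂Pz) * (1 - ∫ x, Y x ∂Pz) / κ := by
  have hYint : Integrable Y Pz :=
    (memLp_of_bounded (ae_of_all _ h01) hY.aestronglyMeasurable 1).integrable le_rfl
  have hvar := variance_empiricalMean_le (Pz := Pz) hY.aemeasurable (ae_of_all _ h01) (κ := κ)
  rwa [variance_eq_integral (measurable_empiricalMean hY).aemeasurable,
    integral_empiricalMean hκ hYint] at hvar

lemma lintegral_klBerE_empiricalMean_le (hκ : κ ≠ 0) (hY : Measurable Y)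
    (h01 : ∀ x, Y x ∈ Set.Icc (0 : ℝ) 1) :
    ∫⁻ z, klBerE (empiricalMean Y z) (∫ x, Y x ∂Pz) ∂(Measure.pi fun _ : Fin κ => Pz)
      ≤ ENNReal.ofReal (1 / κ) := by
  have hsq := integral_sq_empiricalMean_sub_le hκ hY h01 (Pz := Pz)
  set p := ∫ x, Y x ∂Pz
  have hq : ∀ z : Fin κ → Z, empiricalMean Y z ∈ Set.Icc (0 : ℝ) 1 :=
    empiricalMean_mem_Icc h01
  have hsq_int : Integrable (fun z => (empiricalMean Y z - p) ^ 2)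
      (Measure.pi fun _ : Fin κ => Pz) :=
    ((memLp_of_bounded (ae_of_all _ hq) (measurable_empiricalMean hY).aestronglyMeasurable 2).sub
      (memLp_const p)).integrable_sq
  have hp : p ∈ Set.Icc (0 : ℝ) 1 :=
    ⟨integral_nonneg fun x => (h01 x).1, (integral_mono_of_nonneg (ae_of_all _ fun x => (h01 x).1)
      (integrable_const 1) (ae_of_all _ fun x => (h01 x).2)).trans (by simp)⟩
  by_cases hp' : p ∈ Set.Ioo (0 : ℝ) 1
  · have hpp : 0 < p * (1 - p) := mul_pos hp'.1 (sub_pos.mpr hp'.2)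
    calc ∫⁻ z, klBerE (empiricalMean Y z) p ∂(Measure.pi fun _ : Fin κ => Pz)
        ≤ ∫⁻ z, ENNReal.ofReal ((empiricalMean Y z - p) ^ 2 / (p * (1 - p)))
            ∂(Measure.pi fun _ : Fin κ => Pz) := by
          refine lintegral_mono fun z => ?_
          rw [klBerE_of_mem_Ioo hp']
          exact ENNReal.ofReal_le_ofReal (klBer_le_chisq (hq z).1 (hq z).2 hp'.1 hp'.2)
      _ = ENNReal.ofReal (∫ z, (empiricalMean Y z - p) ^ 2 / (p * (1 - p))
            ∂(Measure.pi fun _ : Fin κ => Pz)) :=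
          (ofReal_integral_eq_lintegral_ofReal (hsq_int.div_const _)
            (ae_of_all _ fun _ => by positivity)).symm
      _ ≤ ENNReal.ofReal (1 / κ) := by
          refine ENNReal.ofReal_le_ofReal ?_
          rw [integral_div, div_le_iff₀ hpp]
          exact hsq.trans_eq (by ring)
  · have hpp : p * (1 - p) = 0 := by
      rcases hp.1.eq_or_lt with h | h
      · simp [← h]
      · simp [show p = 1 by by_contra h'; exact hp' ⟨h, lt_of_le_of_ne hp.2 h'⟩]
    have hzero : (fun z => (empiricalMean Y z - p) ^ 2) =ᵐ[Measure.pi fun _ : Fin κ => Pz] 0 :=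
      (integral_eq_zero_iff_of_nonneg (fun _ => sq_nonneg _) hsq_int).mp
        (le_antisymm (by simpa [hpp] using hsq) (integral_nonneg fun _ => sq_nonneg _))
    calc ∫⁻ z, klBerE (empiricalMean Y z) p ∂(Measure.pi fun _ : Fin κ => Pz)
        = ∫⁻ _, 0 ∂(Measure.pi fun _ : Fin κ => Pz) := by
          refine lintegral_congr_ae ?_
          filter_upwards [hzero] with z hz
          rw [sub_eq_zero.mp (pow_eq_zero_iff two_ne_zero |>.mp hz), klBerE_self]
      _ ≤ ENNReal.ofReal (1 / κ) := by simp

end EmpiricalMean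

section Questions

variable {Ψ Z : Type*} [MeasurableSpace Ψ] [MeasurableSpace Z] {Pz : Measure Z}
  {F : Z × Ψ → ℝ} {κ : ℕ}

lemma measurable_klBerE_empiricalMean [SFinite Pz] (hF : Measurable F) :
    Measurable fun x : (Fin κ → Z) × Ψ =>
      klBerE (empiricalMean (fun z => F (z, x.2)) x.1) (∫ z, F (z, x.2) ∂Pz) := by
  refine measurable_klBerE.comp (Measurable.prodMk ?_ ?_)
  · fun_prop
  · exact (hF.stronglyMeasurable.integral_prod_left' (μ := Pz)).measurable.comp measurable_snd

lemma lintegral_lintegral_klBerE_empiricalMean_le [IsProbabilityMeasure Pz] (Pq : Measure Ψ)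
    [IsProbabilityMeasure Pq] (hF : Measurable F) (h01 : ∀ zt, F zt ∈ Set.Icc (0 : ℝ) 1)
    (hκ : κ ≠ 0) :
    ∫⁻ z, ∫⁻ t, klBerE (empiricalMean (fun x => F (x, t)) z) (∫ x, F (x, t) ∂Pz) ∂Pq
        ∂(Measure.pi fun _ : Fin κ => Pz) ≤ ENNReal.ofReal (1 / κ) := by
  rw [lintegral_lintegral_swap (measurable_klBerE_empiricalMean hF).aemeasurable]
  calc _ ≤ ∫⁻ _, ENNReal.ofReal (1 / κ) ∂Pq :=
        lintegral_mono fun t => lintegral_klBerE_empiricalMean_le hκ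
          (hF.comp measurable_prodMk_right) fun x => h01 (x, t)
    _ = ENNReal.ofReal (1 / κ) := by simp

end Questions

/-- with probability at least `1 - δ` over `κ ≥ 1` i.i.d. hidden profiles,
the `(1-α)`-quantile (over questions) of the KL-discrepancy `KL(μ̂_κ(z,·) ‖ μ(·))`
is at most `c'/κ`, where `c'` depends only on `α` and `δ`. -/
theorem stmt10 (α δ : ℝ) (hα : α ∈ Set.Ioo (0 : ℝ) 1) (hδ : δ ∈ Set.Ioo (0 : ℝ) 1) :
    ∃ c' : ℝ, 0 < c' ∧
      ∀ (Ψ : Type u) (_ : MeasurableSpace Ψ) (Z : Type v) (_ : MeasurableSpace Z)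
        (Pq : Measure Ψ) (Pz : Measure Z),
        IsProbabilityMeasure Pq → IsProbabilityMeasure Pz →
      ∀ F : Z × Ψ → ℝ, Measurable F → (∀ zt, F zt ∈ Set.Icc (0 : ℝ) 1) →
      ∀ κ : ℕ, 1 ≤ κ →
        ENNReal.ofReal (1 - δ) ≤
          (Measure.pi fun _ : Fin κ => Pz)
            {zv | quantileE Pq
                (fun t => klBerE ((∑ i, F (zv i, t)) / κ) (∫ zz, F (zz, t) ∂Pz))
                (1 - α)
              ≤ ENNReal.ofReal (c' / κ)} := by
  obtain ⟨hα0, -⟩ := hα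
  obtain ⟨hδ0, -⟩ := hδ
  refine ⟨1 / (α * δ), by positivity, fun Ψ _ Z _ Pq Pz _ _ F hF h01 κ hκ => ?_⟩
  have hH := measurable_klBerE_empiricalMean (κ := κ) (Pz := Pz) hF
  have good_sample := ofReal_one_sub_le_measure_le_of_lintegral_le
    hH.lintegral_prod_right'.aemeasurable hδ0.le (c := 1 / (δ * κ)) (by positivity)
    ((lintegral_lintegral_klBerE_empiricalMean_le Pq hF h01 (by omega)).trans_eq
      (by congr 1; field_simp))
  refine good_sample.trans (measure_mono fun z hz => sInf_le (α := ℝ≥0∞) ?_)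
  exact ofReal_one_sub_le_measure_le_of_lintegral_le
    (hH.comp measurable_prodMk_left).aemeasurable hα0.le (by positivity)
    (hz.trans_eq (by congr 1; field_simp))
end

section
/- Let μ, μ^syn ∈ ℝ with μ ≠ μ^syn, and let α ∈ (0,1). For any integer k ≥ 1, let x_1,…,x_k be i.i.d. normal N(μ^syn, 1) and x̄_k = (1/k)Σ_{i=1}^k x_i. Then P(|x̄_k − μ| ≤ z_{α/2}/√k) < 1 − α; that is, the unscaled CLT interval [x̄_k − z_{α/2}/√k, x̄_k + z_{α/2}/√k] built from the shifted synthetic distribution fails to attain (1−α) coverage of μ for every sample size k. -/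
/-!
Standardising the sample mean, the event is `Z ∈ [d - z, d + z]` with `Z ~ N(0,1)` and
`d = √k (μ - μsyn) ≠ 0`, while `[-z, z]` has mass exactly `1 - α` by the choice of `z`.
The standard normal density `φ` is even and strictly decreasing on `[0, ∞)`, so sliding a
symmetric window away from the origin strictly loses mass: for `d > 0` the loss is
`∫₀ᵈ (φ (t - z) - φ (t + z)) dt > 0`.
-/

open MeasureTheory ProbabilityTheory Set intervalIntegral
open scoped ENNReal NNReal

lemma map_sum_pi_gaussianReal {ι : Type*} [Fintype ι] (m : ℝ) (v : ℝ≥0) :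
    (Measure.pi fun _ : ι => gaussianReal m v).map (fun p => ∑ i, p i)
      = gaussianReal (Fintype.card ι * m) (Fintype.card ι * v) := by
  refine Measure.ext_of_charFun (funext fun t => ?_)
  rw [charFun_map_sum_pi_eq_prod, Finset.prod_apply, Finset.prod_const, Finset.card_univ,
    charFun_gaussianReal, charFun_gaussianReal, ← Complex.exp_nat_mul]
  push_cast
  ring_nf

lemma hasLaw_sum_sub_div_sqrt_card_gaussianReal {Ω ι : Type*} [MeasurableSpace Ω]
    {P : Measure Ω} [Fintype ι] [Nonempty ι] {X : ι → Ω → ℝ} {m : ℝ}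
    (hX : HasLaw (fun ω i => X i ω) (Measure.pi fun _ => gaussianReal m 1) P) :
    HasLaw (fun ω => (∑ i, X i ω - Fintype.card ι * m) / √(Fintype.card ι))
      (gaussianReal 0 1) P := by
  have hsum : HasLaw (fun ω => ∑ i, X i ω)
      (gaussianReal (Fintype.card ι * m) (Fintype.card ι)) P := by
    simpa [map_sum_pi_gaussianReal] using
      HasLaw.fun_comp (Y := fun p : ι → ℝ => ∑ i, p i) ⟨by fun_prop, rfl⟩ hX
  convert gaussianReal_div_const (gaussianReal_sub_const hsum _) (√(Fintype.card ι)) using 2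
  · simp
  · ext
    simp [Fintype.card_ne_zero]

lemma abs_div_sub_le_div_sqrt_iff {K : ℝ} (hK : 0 < K) (s m μ z : ℝ) :
    |s / K - μ| ≤ z / √K ↔
      (s - K * m) / √K ∈ Icc (√K * (μ - m) - z) (√K * (μ - m) + z) := by
  have hsqrt : 0 < √K := Real.sqrt_pos.2 hK
  have hscale : (s - K * m) / √K - √K * (μ - m) = √K * (s / K - μ) := by
    field_simp
    rw [Real.sq_sqrt hK.le]
    ring
  rw [← mem_Icc_iff_abs_le, abs_sub_comm (√K * (μ - m)), hscale, abs_mul, abs_of_pos hsqrt,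
    le_div_iff₀ hsqrt, mul_comm]

section EvenFunction

variable {f : ℝ → ℝ}

lemma integral_neg_self_eq_of_even (hf : Integrable f) (heven : ∀ t, f (-t) = f t) (z : ℝ) :
    ∫ t in (-z)..z, f t = 2 * (∫ t in Iic z, f t) - ∫ t, f t := by
  have htail : ∫ t in Iic (-z), f t = ∫ t in Ioi z, f t := by
    rw [← integral_comp_neg_Ioi]
    simp_rw [heven]
  have hsplit := integral_Iic_add_Ioi (b := z) hf.integrableOn hf.integrableOn
  rw [← integral_Iic_sub_Iic hf.integrableOn hf.integrableOn, htail, ← hsplit]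
  ring

lemma integral_shift_lt_of_even_of_strictAntiOn_of_pos (hf : Continuous f)
    (heven : ∀ t, f (-t) = f t) (hanti : StrictAntiOn f (Ici 0)) {z d : ℝ} (hz : 0 < z)
    (hd : 0 < d) :
    ∫ t in (d - z)..(d + z), f t < ∫ t in (-z)..z, f t := by
  have hlt : ∀ t ∈ Ioo 0 d, f (t + z) < f (t - z) := fun t ht => by
    have habs : f |t - z| = f (t - z) := by
      rcases abs_choice (t - z) with h | h <;> rw [h]
      exact heven _
    exact habs ▸ hanti (mem_Ici.2 (abs_nonneg _)) (mem_Ici.2 (by linarith [ht.1]))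
      (abs_sub_lt_iff.2 ⟨by linarith [ht.1], by linarith [ht.1]⟩)
  have hdiff : (∫ t in (-z)..z, f t) - ∫ t in (d - z)..(d + z), f t
      = ∫ t in (0 : ℝ)..d, (f (t - z) - f (t + z)) := by
    have hleft : IntervalIntegrable (fun t => f (t - z)) volume 0 d :=
      (hf.comp (continuous_sub_right z)).intervalIntegrable _ _
    have hright : IntervalIntegrable (fun t => f (t + z)) volume 0 d :=
      (hf.comp (continuous_add_const z)).intervalIntegrable _ _
    rw [integral_interval_sub_interval_comm (hf.intervalIntegrable _ _)
      (hf.intervalIntegrable _ _) (hf.intervalIntegrable _ _), integral_sub hleft hright,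
      integral_comp_sub_right, integral_comp_add_right, zero_sub, zero_add]
  have hpos : 0 < ∫ t in (0 : ℝ)..d, (f (t - z) - f (t + z)) :=
    intervalIntegral_pos_of_pos_on (Continuous.intervalIntegrable (by fun_prop) _ _)
      (fun t ht => sub_pos.2 (hlt t ht)) hd
  linarith

lemma integral_shift_lt_of_even_of_strictAntiOn (hf : Continuous f) (heven : ∀ t, f (-t) = f t)
    (hanti : StrictAntiOn f (Ici 0)) {z d : ℝ} (hz : 0 < z) (hd : d ≠ 0) :
    ∫ t in (d - z)..(d + z), f t < ∫ t in (-z)..z, f t := by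
  rcases hd.lt_or_gt with hneg | hpos
  · calc ∫ t in (d - z)..(d + z), f t = ∫ t in (d - z)..(d + z), f (-t) := by simp_rw [heven]
      _ = ∫ t in (-d - z)..(-d + z), f t := by
        rw [intervalIntegral.integral_comp_neg]
        congr 1 <;> ring
      _ < ∫ t in (-z)..z, f t :=
        integral_shift_lt_of_even_of_strictAntiOn_of_pos hf heven hanti hz (neg_pos.2 hneg)
  · exact integral_shift_lt_of_even_of_strictAntiOn_of_pos hf heven hanti hz hpos

end EvenFunction

lemma continuous_gaussianPDFReal (μ : ℝ) (v : ℝ≥0) : Continuous (gaussianPDFReal μ v) := by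
  rw [gaussianPDFReal_def]
  fun_prop

lemma gaussianPDFReal_zero_neg (v : ℝ≥0) (t : ℝ) :
    gaussianPDFReal 0 v (-t) = gaussianPDFReal 0 v t := by
  simp [gaussianPDFReal]

lemma strictAntiOn_gaussianPDFReal_zero {v : ℝ≥0} (hv : v ≠ 0) :
    StrictAntiOn (gaussianPDFReal 0 v) (Ici 0) := by
  intro a ha b _ hab
  have hv' : (0 : ℝ) < v := by positivity
  simp only [gaussianPDFReal, sub_zero]
  gcongr

lemma integral_neg_self_gaussianPDFReal {v : ℝ≥0} (hv : v ≠ 0) {z p : ℝ} (hp : 0 ≤ p)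
    (hz : gaussianReal 0 v (Iic z) = ENNReal.ofReal p) :
    ∫ t in (-z)..z, gaussianPDFReal 0 v t = 2 * p - 1 := by
  rw [gaussianReal_apply_eq_integral 0 hv, ENNReal.ofReal_eq_ofReal_iff
    (setIntegral_nonneg measurableSet_Iic fun t _ => gaussianPDFReal_nonneg _ _ _) hp] at hz
  rw [integral_neg_self_eq_of_even (integrable_gaussianPDFReal 0 v) (gaussianPDFReal_zero_neg v),
    hz, integral_gaussianPDFReal_eq_one 0 hv]

theorem stmt13_general (μ μsyn : ℝ) (hne : μ ≠ μsyn) (α : ℝ) (hα : α ∈ Set.Ioo (0 : ℝ) 1)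
    (z : ℝ) (hz : gaussianReal 0 1 (Set.Iic z) = ENNReal.ofReal (1 - α / 2))
    (k : ℕ) (hk : 1 ≤ k)
    {Ω : Type*} [MeasurableSpace Ω] (P : Measure Ω)
    (x : Fin k → Ω → ℝ)
    (hlaw : Measure.map (fun ω => fun i => x i ω) P
      = Measure.pi fun _ : Fin k => gaussianReal μsyn 1) :
    P {ω | |(∑ i, x i ω) / k - μ| ≤ z / Real.sqrt k} < ENNReal.ofReal (1 - α) := by
  have hcoverage : ∫ t in (-z)..z, gaussianPDFReal 0 1 t = 1 - α := by
    rw [integral_neg_self_gaussianPDFReal one_ne_zero (by linarith [hα.2]) hz]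
    ring
  have hz_pos : 0 < z := by
    by_contra! hz_nonpos
    have : ∫ t in (-z)..z, gaussianPDFReal 0 1 t ≤ 0 := by
      rw [integral_symm]
      exact neg_nonpos.2 (integral_nonneg (by linarith) fun t _ => gaussianPDFReal_nonneg _ _ _)
    linarith [hα.2]
  have : Nonempty (Fin k) := ⟨⟨0, hk⟩⟩
  have hZ := hasLaw_sum_sub_div_sqrt_card_gaussianReal
    ⟨AEMeasurable.of_map_ne_zero (by rw [hlaw]; exact NeZero.ne _), hlaw⟩
  simp only [Fintype.card_fin] at hZ
  set d := √k * (μ - μsyn)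
  calc P {ω | |(∑ i, x i ω) / k - μ| ≤ z / Real.sqrt k}
      = P {ω | (∑ i, x i ω - k * μsyn) / √k ∈ Icc (d - z) (d + z)} := by
        simp_rw [abs_div_sub_le_div_sqrt_iff (m := μsyn) (Nat.cast_pos.2 hk)]
        rfl
    _ = gaussianReal 0 1 (Icc (d - z) (d + z)) := by
        rw [← hZ.map_eq, Measure.map_apply_of_aemeasurable hZ.aemeasurable measurableSet_Icc]
        rfl
    _ = ENNReal.ofReal (∫ t in (d - z)..(d + z), gaussianPDFReal 0 1 t) := by
        rw [gaussianReal_apply_eq_integral 0 one_ne_zero, integral_Icc_eq_integral_Ioc,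
          ← integral_of_le (by linarith)]
    _ < ENNReal.ofReal (1 - α) := by
        rw [← hcoverage, ENNReal.ofReal_lt_ofReal_iff (hcoverage ▸ sub_pos.2 hα.2)]
        exact integral_shift_lt_of_even_of_strictAntiOn (continuous_gaussianPDFReal 0 1)
          (gaussianPDFReal_zero_neg 1) (strictAntiOn_gaussianPDFReal_zero one_ne_zero) hz_pos
          (mul_ne_zero (by positivity) (sub_ne_zero.2 hne))

/-- under a mean shift, the unscaled CLT interval built from synthetic normal
samples fails to attain `1 - α` coverage of the true mean, for every sample size `k`.
Here `z` is the `(1 - α/2)`-quantile of `N(0,1)`, characterized by its CDF value. -/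
theorem stmt13 (μ μsyn : ℝ) (hne : μ ≠ μsyn) (α : ℝ) (hα : α ∈ Set.Ioo (0 : ℝ) 1)
    (z : ℝ) (hz : gaussianReal 0 1 (Set.Iic z) = ENNReal.ofReal (1 - α / 2))
    (k : ℕ) (hk : 1 ≤ k)
    {Ω : Type*} [MeasurableSpace Ω] (P : Measure Ω) [IsProbabilityMeasure P]
    (x : Fin k → Ω → ℝ)
    (hlaw : Measure.map (fun ω => fun i => x i ω) P
      = Measure.pi fun _ : Fin k => gaussianReal μsyn 1) :
    P {ω | |(∑ i, x i ω) / k - μ| ≤ z / Real.sqrt k} < ENNReal.ofReal (1 - α) :=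
  stmt13_general μ μsyn hne α hα z hz k hk P x hlaw
end
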